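/- Let M be a Hurwitz stable Metzler matrix and C, G nonnegative matrices. For γ > 0, the following are equivalent: (i) there exists v ∈ ℝ₊₊ⁿ such that vᵀM + 𝟙ᵀC < 0 entrywise and vᵀG ≤ γ𝟙ᵀ entrywise; (ii) every column sum of −C M⁻¹ G is strictly less than γ. -/

import Mathlib

/-!
Everything rests on `-M⁻¹` being entrywise nonnegative. For `t ≥ 0` the matrix `t • 1 - M` is
invertible (Hurwitz), and its inverse is nonnegative for large `t`: with `c` so large that
`A = M + c • 1 ≥ 0` (Metzler), `t • 1 - M = (t + c) • (1 - (t + c)⁻¹ • A)` is inverted by a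
Neumann series of nonnegative matrices. The set of `t` where `(t • 1 - M)⁻¹ ≥ 0` is closed, and a
Neumann series around `(s • 1 - M)⁻¹` shows it also contains every `t` slightly below any of its
points; continuous induction brings it down to `t = 0`.

With `N = -M⁻¹ ≥ 0` invertible, `u = 𝟙ᵀC N` solves `uᵀM + 𝟙ᵀC = 0` and the column sums of
`-C M⁻¹ G` are `uᵀG`. Any `v` as in (i) satisfies `v - u = -(vᵀM + 𝟙ᵀC) N ≫ 0`, so `uᵀG < γ`;
conversely `v = (𝟙ᵀC + ε 𝟙ᵀ) N` satisfies (i) for small `ε > 0`.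
-/

open Matrix Filter Topology Set

namespace Matrix

variable {ι κ : Type*} [Fintype ι]

lemma mul_apply_nonneg {R l m p : Type*} [Semiring R] [PartialOrder R] [IsOrderedRing R]
    [Fintype m] {A : Matrix l m R} {B : Matrix m p R} (hA : ∀ i j, 0 ≤ A i j)
    (hB : ∀ i j, 0 ≤ B i j) (i : l) (j : p) : 0 ≤ (A * B) i j :=
  Finset.sum_nonneg fun k _ => mul_nonneg (hA i k) (hB k j)

lemma isClosed_setOf_forall_apply_nonneg {R m p : Type*} [TopologicalSpace R] [Preorder R]
    [OrderClosedTopology R] [Zero R] : IsClosed {A : Matrix m p R | ∀ i j, 0 ≤ A i j} := by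
  simp only [ofPred_forall]
  exact isClosed_iInter fun i => isClosed_iInter fun j =>
    isClosed_le continuous_const (continuous_id.matrix_elem i j)

lemma vecMul_apply_lt_of_lt_of_vecMul_le {G : Matrix ι κ ℝ} (hG : ∀ i j, 0 ≤ G i j) {γ : ℝ}
    (hγ : 0 < γ) {u v : ι → ℝ} (huv : ∀ k, u k < v k) (hv : ∀ j, (v ᵥ* G) j ≤ γ) (j : κ) :
    (u ᵥ* G) j < γ := by
  by_cases hcol : ∀ k, G k j = 0
  · simpa [vecMul, dotProduct, hcol] using hγ
  push Not at hcol
  obtain ⟨k, hk⟩ := hcol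
  refine lt_of_lt_of_le (Finset.sum_lt_sum (fun i _ => ?_) ⟨k, Finset.mem_univ _, ?_⟩) (hv j)
  · exact mul_le_mul_of_nonneg_right (huv i).le (hG i j)
  · exact mul_lt_mul_of_pos_right (huv k) ((hG k j).lt_of_ne' hk)

lemma exists_pos_forall_vecMul_add_smul_lt [Finite κ] {u z : ι → ℝ} {G : Matrix ι κ ℝ} {γ : ℝ}
    (h : ∀ j, (u ᵥ* G) j < γ) : ∃ ε : ℝ, 0 < ε ∧ ∀ j, ((u + ε • z) ᵥ* G) j < γ := by
  have hev : ∀ᶠ ε in 𝓝[>] (0 : ℝ), ∀ j, ((u + ε • z) ᵥ* G) j < γ := by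
    refine eventually_all.2 fun j => eventually_nhdsWithin_of_eventually_nhds ?_
    refine ContinuousAt.eventually_lt (f := fun ε : ℝ => ((u + ε • z) ᵥ* G) j) (by fun_prop)
      continuousAt_const ?_
    simpa using h j
  obtain ⟨ε, hεG, hε⟩ := (hev.and self_mem_nhdsWithin).exists
  exact ⟨ε, hε, hεG⟩

variable [DecidableEq ι]

lemma mem_spectrum_map_algebraMap_complex {M : Matrix ι ι ℝ} {s : ℝ} (hs : s ∈ spectrum ℝ M) :
    (s : ℂ) ∈ spectrum ℂ (M.map (algebraMap ℝ ℂ)) := by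
  rw [mem_spectrum_iff_isRoot_charpoly] at hs ⊢
  rw [charpoly_map]
  exact hs.map

lemma isUnit_det_smul_one_sub_of_hurwitz {M : Matrix ι ι ℝ}
    (hHurwitz : ∀ μ ∈ spectrum ℂ (M.map (algebraMap ℝ ℂ)), μ.re < 0) {t : ℝ} (ht : 0 ≤ t) :
    IsUnit (t • (1 : Matrix ι ι ℝ) - M).det := by
  by_contra h
  have hspec : t ∈ spectrum ℝ M := by
    rwa [spectrum.mem_iff, Algebra.algebraMap_eq_smul_one, isUnit_iff_isUnit_det]
  have := hHurwitz _ (mem_spectrum_map_algebraMap_complex hspec)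
  rw [Complex.ofReal_re] at this
  linarith

section LinftyOpNorm

attribute [local instance] Matrix.linftyOpNormedAddCommGroup Matrix.linftyOpNormedRing
  Matrix.linftyOpNormedSpace Matrix.linftyOpNormedAlgebra

lemma inv_one_sub_apply_nonneg {B : Matrix ι ι ℝ} (hB : ∀ i j, 0 ≤ B i j) (hB1 : ‖B‖ < 1)
    (i j : ι) : 0 ≤ (1 - B)⁻¹ i j := by
  have hsum : Summable fun k : ℕ => B ^ k := summable_geometric_of_norm_lt_one hB1
  rw [nonsing_inv_eq_ringInverse, ← geom_series_eq_inverse B hB1]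
  exact (Pi.hasSum.1 (Pi.hasSum.1 hsum.hasSum i) j).nonneg fun k => pow_apply_nonneg hB k i j

lemma inv_sub_apply_nonneg {X Y : Matrix ι ι ℝ} (hX : IsUnit X.det) (hXinv : ∀ i j, 0 ≤ X⁻¹ i j)
    (hY : ∀ i j, 0 ≤ Y i j) (hXY : ‖X⁻¹ * Y‖ < 1) (i j : ι) : 0 ≤ (X - Y)⁻¹ i j := by
  have hfactor : X - Y = X * (1 - X⁻¹ * Y) := by
    rw [Matrix.mul_sub, Matrix.mul_one, ← Matrix.mul_assoc, mul_nonsing_inv X hX, Matrix.one_mul]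
  rw [hfactor, mul_inv_rev]
  exact mul_apply_nonneg (inv_one_sub_apply_nonneg (mul_apply_nonneg hXinv hY) hXY) hXinv i j

variable {M : Matrix ι ι ℝ}

lemma inv_smul_one_sub_apply_nonneg_of_le {s t : ℝ}
    (hs : IsUnit (s • (1 : Matrix ι ι ℝ) - M).det)
    (hR : ∀ i j, 0 ≤ (s • (1 : Matrix ι ι ℝ) - M)⁻¹ i j) (hts : t ≤ s)
    (hst : (s - t) * ‖(s • (1 : Matrix ι ι ℝ) - M)⁻¹‖ < 1) (i j : ι) :
    0 ≤ (t • (1 : Matrix ι ι ℝ) - M)⁻¹ i j := by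
  have hshift : t • (1 : Matrix ι ι ℝ) - M = (s • 1 - M) - (s - t) • (1 : Matrix ι ι ℝ) := by
    module
  rw [hshift]
  refine inv_sub_apply_nonneg hs hR (fun i j => ?_) ?_ i j
  · rw [smul_apply, one_apply, smul_eq_mul]
    split_ifs <;> linarith
  · rwa [Matrix.mul_smul, Matrix.mul_one, norm_smul, Real.norm_of_nonneg (sub_nonneg.2 hts)]

lemma exists_inv_smul_one_sub_apply_nonneg (hM : ∀ i j, i ≠ j → 0 ≤ M i j) :
    ∃ T : ℝ, ∀ t ≥ T, ∀ i j, 0 ≤ (t • (1 : Matrix ι ι ℝ) - M)⁻¹ i j := by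
  set c := ∑ i, |M i i|
  set A := M + c • (1 : Matrix ι ι ℝ)
  have hA : ∀ i j, 0 ≤ A i j := by
    intro i j
    simp only [A, add_apply, smul_apply, one_apply, smul_eq_mul]
    split_ifs with h
    · subst h
      have : |M i i| ≤ c := Finset.single_le_sum (fun k _ => abs_nonneg (M k k)) (Finset.mem_univ i)
      linarith [neg_abs_le (M i i)]
    · simpa using hM i j h
  refine ⟨‖A‖ + |c| + 1, fun t ht i j => ?_⟩
  have hpos : 0 < t + c := by linarith [neg_abs_le c, norm_nonneg A]
  have hinv : ((t + c) • (1 : Matrix ι ι ℝ)) * ((t + c)⁻¹ • 1) = 1 := by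
    rw [smul_mul_smul, Matrix.one_mul, mul_inv_cancel₀ hpos.ne', one_smul]
  have hshift : t • (1 : Matrix ι ι ℝ) - M = (t + c) • 1 - A := by module
  rw [hshift]
  refine inv_sub_apply_nonneg (isUnit_det_of_right_inverse hinv) ?_ hA ?_ i j
  · intro i j
    rw [inv_eq_right_inv hinv, smul_apply, one_apply, smul_eq_mul]
    split_ifs <;> simp [hpos.le]
  · rw [inv_eq_right_inv hinv, smul_mul, Matrix.one_mul, norm_smul, norm_inv,
      Real.norm_of_nonneg hpos.le, inv_mul_lt_one₀ hpos]
    linarith [neg_abs_le c]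

lemma continuousAt_inv_smul_one_sub {t : ℝ} (ht : IsUnit (t • (1 : Matrix ι ι ℝ) - M).det) :
    ContinuousAt (fun s : ℝ => (s • (1 : Matrix ι ι ℝ) - M)⁻¹) t := by
  obtain ⟨u, hu⟩ := ht
  refine ContinuousAt.comp (f := fun s : ℝ => s • (1 : Matrix ι ι ℝ) - M) ?_ (by fun_prop)
  exact continuousAt_matrix_inv _ (hu ▸ NormedRing.inverse_continuousAt u)


theorem inv_smul_one_sub_apply_nonneg_of_metzler_of_hurwitz (hMetzler : ∀ i j, i ≠ j → 0 ≤ M i j)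
    (hHurwitz : ∀ μ ∈ spectrum ℂ (M.map (algebraMap ℝ ℂ)), μ.re < 0) {t : ℝ} (ht : 0 ≤ t) :
    ∀ i j, 0 ≤ (t • (1 : Matrix ι ι ℝ) - M)⁻¹ i j := by
  obtain ⟨T, hT⟩ := exists_inv_smul_one_sub_apply_nonneg hMetzler
  have hunit : ∀ s, t ≤ s → IsUnit (s • (1 : Matrix ι ι ℝ) - M).det := fun s hs =>
    isUnit_det_smul_one_sub_of_hurwitz hHurwitz (ht.trans hs)
  set S := {s : ℝ | ∀ i j, 0 ≤ (s • (1 : Matrix ι ι ℝ) - M)⁻¹ i j}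
  have hclosed : IsClosed (S ∩ Icc t (max t T)) := by
    rw [inter_comm]
    exact ContinuousOn.preimage_isClosed_of_isClosed
      (fun s hs => (continuousAt_inv_smul_one_sub (hunit s hs.1)).continuousWithinAt)
      isClosed_Icc isClosed_setOf_forall_apply_nonneg
  have hstep : ∀ x ∈ S ∩ Ioc t (max t T), ∀ y ∈ Iio x, (S ∩ Ico y x).Nonempty := by
    rintro x ⟨hxS, hxt, -⟩ y hyx
    set r := ‖(x • (1 : Matrix ι ι ℝ) - M)⁻¹‖
    have hr : 0 ≤ r := norm_nonneg _
    set δ := (r + 1)⁻¹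
    have hδ : 0 < δ := by positivity
    have hδr : δ * r < 1 := by
      rw [inv_mul_lt_one₀ (by positivity)]
      linarith
    refine ⟨max y (x - δ), fun i j => ?_, le_max_left _ _, max_lt hyx (by linarith)⟩
    refine inv_smul_one_sub_apply_nonneg_of_le (hunit x hxt.le) hxS (max_le hyx.le (by linarith))
      ?_ i j
    calc (x - max y (x - δ)) * r ≤ δ * r := by gcongr; linarith [le_max_right y (x - δ)]
      _ < 1 := hδr
  exact hclosed.Icc_subset_of_forall_exists_lt (hT _ (le_max_right _ _)) hstep
    ⟨le_rfl, le_max_left _ _⟩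

end LinftyOpNorm

theorem neg_inv_apply_nonneg_of_metzler_of_hurwitz {M : Matrix ι ι ℝ}
    (hMetzler : ∀ i j, i ≠ j → 0 ≤ M i j)
    (hHurwitz : ∀ μ ∈ spectrum ℂ (M.map (algebraMap ℝ ℂ)), μ.re < 0) :
    IsUnit M.det ∧ ∀ i j, 0 ≤ (-M⁻¹) i j := by
  have hunit := isUnit_det_smul_one_sub_of_hurwitz hHurwitz le_rfl
  have hnonneg := inv_smul_one_sub_apply_nonneg_of_metzler_of_hurwitz hMetzler hHurwitz le_rfl
  rw [zero_smul, zero_sub] at hunit hnonneg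
  have hdet : IsUnit M.det := by
    rw [← isUnit_iff_isUnit_det] at hunit ⊢
    simpa using hunit.neg
  have hneg : (-M)⁻¹ = -M⁻¹ := inv_eq_right_inv (by rw [neg_mul_neg, mul_nonsing_inv M hdet])
  exact ⟨hdet, hneg ▸ hnonneg⟩

lemma isUnit_det_neg_inv {M : Matrix ι ι ℝ} (hdet : IsUnit M.det) : IsUnit (-M⁻¹).det := by
  rw [det_neg]
  exact ((isUnit_one.neg).pow _).mul (isUnit_nonsing_inv_det M hdet)

lemma vecMul_apply_pos_of_isUnit_det {N : Matrix ι ι ℝ} (hN : ∀ i j, 0 ≤ N i j)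
    (hdet : IsUnit N.det) {x : ι → ℝ} (hx : ∀ i, 0 < x i) (k : ι) : 0 < (x ᵥ* N) k := by
  obtain ⟨i, hi⟩ : ∃ i, N i k ≠ 0 := by
    by_contra! h
    exact hdet.ne_zero (det_eq_zero_of_column_eq_zero k h)
  exact Finset.sum_pos' (fun j _ => mul_nonneg (hx j).le (hN j k))
    ⟨i, Finset.mem_univ _, mul_pos (hx i) ((hN i k).lt_of_ne' hi)⟩

lemma vecMul_neg_inv_vecMul {M : Matrix ι ι ℝ} (hdet : IsUnit M.det) (x : ι → ℝ) :
    (x ᵥ* -M⁻¹) ᵥ* M = -x := by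
  rw [vecMul_vecMul, Matrix.neg_mul, nonsing_inv_mul M hdet, vecMul_neg, vecMul_one]

lemma vecMul_neg_inv_apply_lt_of_vecMul_add_neg {M : Matrix ι ι ℝ} (hdet : IsUnit M.det)
    (hN : ∀ i j, 0 ≤ (-M⁻¹) i j) {v w : ι → ℝ} (h : ∀ j, (v ᵥ* M) j + w j < 0) (k : ι) :
    (w ᵥ* -M⁻¹) k < v k := by
  have hdiff : (-(v ᵥ* M + w)) ᵥ* -M⁻¹ = v - w ᵥ* -M⁻¹ := by
    simp only [neg_vecMul, vecMul_neg, neg_neg, sub_neg_eq_add, add_vecMul, vecMul_vecMul,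
      mul_nonsing_inv M hdet, vecMul_one]
  have hpos := vecMul_apply_pos_of_isUnit_det (x := -(v ᵥ* M + w)) hN (isUnit_det_neg_inv hdet)
    (fun j => neg_pos.2 (h j)) k
  rwa [hdiff, Pi.sub_apply, sub_pos] at hpos

end Matrix

/-- for a Hurwitz stable Metzler `M`, nonnegative `C, G`, and `γ > 0`:
there exists `v ≫ 0` with `vᵀM + 𝟙ᵀC < 0` and `vᵀG ≤ γ𝟙ᵀ` entrywise iff every
column sum of `−C M⁻¹ G` is strictly less than `γ`. -/
theorem stmt_10 (n r s : ℕ) (M : Matrix (Fin n) (Fin n) ℝ)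
    (hMetzler : ∀ i j, i ≠ j → 0 ≤ M i j)
    (hHurwitz : ∀ μ ∈ spectrum ℂ (M.map (algebraMap ℝ ℂ)), μ.re < 0)
    (C : Matrix (Fin r) (Fin n) ℝ) (hC : ∀ i j, 0 ≤ C i j)
    (G : Matrix (Fin n) (Fin s) ℝ) (hG : ∀ i j, 0 ≤ G i j)
    (γ : ℝ) (hγ : 0 < γ) :
    (∃ v : Fin n → ℝ, (∀ i, 0 < v i) ∧
        (∀ j, Matrix.vecMul v M j + ∑ i, C i j < 0) ∧
        (∀ j, Matrix.vecMul v G j ≤ γ)) ↔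
      ∀ j, ∑ i, (-(C * M⁻¹ * G)) i j < γ := by
  obtain ⟨hdet, hN⟩ := neg_inv_apply_nonneg_of_metzler_of_hurwitz hMetzler hHurwitz
  have hsum : ∀ {m p : ℕ} (A : Matrix (Fin m) (Fin p) ℝ) j, ∑ i, A i j = (1 ᵥ* A) j :=
    fun A j => by simp [vecMul, dotProduct]
  have hcol : ∀ j, ∑ i, (-(C * M⁻¹ * G)) i j = (((1 ᵥ* C) ᵥ* -M⁻¹) ᵥ* G) j := fun j => by
    rw [hsum, ← Matrix.neg_mul, ← Matrix.mul_neg, ← vecMul_vecMul, ← vecMul_vecMul]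
  have hw : ∀ j, 0 ≤ (1 ᵥ* C) j := fun j => hsum C j ▸ Finset.sum_nonneg fun i _ => hC i j
  simp_rw [hsum C, hcol]
  set w := 1 ᵥ* C
  constructor
  · rintro ⟨v, -, hvM, hvG⟩
    exact vecMul_apply_lt_of_lt_of_vecMul_le hG hγ
      (vecMul_neg_inv_apply_lt_of_vecMul_add_neg hdet hN hvM) hvG
  · intro hlt
    obtain ⟨ε, hε, hεG⟩ := exists_pos_forall_vecMul_add_smul_lt (z := 1 ᵥ* -M⁻¹) hlt
    refine ⟨(w + ε • 1) ᵥ* -M⁻¹, ?_, fun j => ?_, fun j => ?_⟩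
    · refine vecMul_apply_pos_of_isUnit_det hN (isUnit_det_neg_inv hdet) fun k => ?_
      simpa using add_pos_of_nonneg_of_pos (hw k) hε
    · rw [vecMul_neg_inv_vecMul hdet]
      simpa using hε
    · rw [add_vecMul, smul_vecMul]
      exact (hεG j).le
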